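/- arXiv:1903.03855 — 6 statements merged into one kernel-verified Lean document; each statement's English description precedes it below -/
import Mathlib

section
/- Let z0 > 0 and let r : ℝ → ℂ be continuous with sup_{|ζ|≤z0} |r(ζ)| < 1 and |r(-ζ)| = |r(ζ)| for all ζ ∈ [-z0, z0]. Define κ = -(1/(2π))·log(1-|r(z0)|²), χ(z) = (1/(2πi))·∫_{-z0}^{z0} log((1-|r(ζ)|²)/(1-|r(z0)|²))·(ζ-z)^{-1} dζ, and δ(z) = ((z-z0)/(z+z0))^{iκ}·e^{χ(z)} for z ∈ ℂ ∖ [-z0, z0], where w^{iκ} is taken with the principal branch of the logarithm. Then for every z ∈ ℂ ∖ [-z0, z0] one has the symmetries δ(z) = (conj(δ(conj(z))))^{-1} and δ(z) = conj(δ(-conj(z))). -/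
/-!
The Möbius map `w(z) = (z - z₀)/(z + z₀)` satisfies `w(conj z) = conj w(z)` and
`w(-conj z) = (conj w(z))⁻¹`, and off the negative axis the principal power commutes with
conjugation. For `χ`, the Cauchy transform of a real density is conjugation-equivariant, it is odd
when the density is even (as `log(1 - |r|²)` is), and the prefactor `1/(2πi)` is imaginary.
-/

open Real Complex Set ComplexConjugate

lemma sub_div_add_mem_slitPlane {a : ℝ} (ha : 0 ≤ a) {z : ℂ}
    (hz : z ∉ ((↑) : ℝ → ℂ) '' Icc (-a) a) : (z - a) / (z + a) ∈ slitPlane := by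
  have hza : z + a ≠ 0 := fun h =>
    hz ⟨-a, ⟨le_rfl, by linarith⟩, by push_cast; linear_combination -h⟩
  contrapose! hz
  rw [mem_slitPlane_iff, not_or, not_lt, not_not] at hz
  set t := ((z - a) / (z + a)).re
  have ht : (z - a) / (z + a) = t := Complex.ext rfl (by simpa using hz.2)
  have h1t : 0 < 1 - t := by linarith [hz.1]
  have h1t' : (1 - t : ℂ) ≠ 0 := by exact_mod_cast h1t.ne'
  -- `w = (z - a)/(z + a)` inverts to `z = a (1 + w)/(1 - w)`, mapping `(-∞, 0]` into `[-a, a]`.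
  have hz_eq : z = ((a * (1 + t) / (1 - t) : ℝ) : ℂ) := by
    rw [div_eq_iff hza] at ht
    push_cast
    rw [eq_div_iff h1t']
    linear_combination ht
  refine ⟨_, ⟨?_, ?_⟩, hz_eq.symm⟩
  · rw [le_div_iff₀ h1t]; nlinarith [hz.1]
  · rw [div_le_iff₀ h1t]; nlinarith [hz.1]

lemma conj_conj_cpow_I_mul_ofReal {w : ℂ} (hw : w.arg ≠ π) (κ : ℝ) :
    conj (conj w ^ (I * κ)) = (w ^ (I * κ))⁻¹ := by
  rw [← cpow_conj _ _ hw, ← cpow_neg]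
  simp

lemma conj_inv_conj_cpow_I_mul_ofReal {w : ℂ} (hw : w.arg ≠ π) (κ : ℝ) :
    conj ((conj w)⁻¹ ^ (I * κ)) = w ^ (I * κ) := by
  have hw_inv : w⁻¹.arg ≠ π := by
    rw [arg_inv, if_neg hw]
    linarith [neg_pi_lt_arg w]
  rw [← map_inv₀, conj_conj_cpow_I_mul_ofReal hw_inv, inv_cpow _ _ hw, inv_inv]

noncomputable def cauchyTransform (f : ℝ → ℝ) (a b : ℝ) (z : ℂ) : ℂ :=
  ∫ ζ in a..b, (f ζ : ℂ) / (ζ - z)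

lemma conj_cauchyTransform (f : ℝ → ℝ) (a b : ℝ) (z : ℂ) :
    conj (cauchyTransform f a b z) = cauchyTransform f a b (conj z) := by
  simp [cauchyTransform, ← intervalIntegral.intervalIntegral_conj]

lemma cauchyTransform_neg_of_even {f : ℝ → ℝ} {a : ℝ} (ha : 0 ≤ a)
    (hf : ∀ ζ ∈ Icc (-a) a, f (-ζ) = f ζ) (z : ℂ) :
    cauchyTransform f (-a) a (-z) = -cauchyTransform f (-a) a z := by
  have hcomp := intervalIntegral.integral_comp_neg (a := -a) (b := a)
    (fun ζ : ℝ => (f ζ : ℂ) / (ζ - z))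
  rw [neg_neg] at hcomp
  rw [cauchyTransform, cauchyTransform, ← hcomp, ← intervalIntegral.integral_neg]
  refine intervalIntegral.integral_congr fun ζ hζ => ?_
  rw [uIcc_of_le (by linarith)] at hζ
  simp only [hf ζ hζ, ofReal_neg, sub_neg_eq_add]
  rw [show -(ζ : ℂ) - z = -(ζ + z) by ring, div_neg, neg_neg]

theorem stmt_0_general (z0 : ℝ) (hz0 : 0 < z0) (r : ℝ → ℂ)
    (hsym : ∀ ζ : ℝ, ζ ∈ Set.Icc (-z0) z0 → ‖r (-ζ)‖ = ‖r ζ‖)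
    (κ : ℝ)
    (χ : ℂ → ℂ)
    (hχ : ∀ z : ℂ, χ z = (1 / (2 * (π : ℂ) * Complex.I)) *
      ∫ ζ in (-z0)..z0,
        ((Real.log ((1 - ‖r ζ‖ ^ 2) / (1 - ‖r z0‖ ^ 2)) : ℝ) : ℂ) /
          ((ζ : ℂ) - z))
    (δ : ℂ → ℂ)
    (hδ : ∀ z : ℂ, δ z = ((z - (z0 : ℂ)) / (z + (z0 : ℂ))) ^ (Complex.I * (κ : ℂ)) *
      Complex.exp (χ z)) :
    ∀ z : ℂ, z ∉ (fun x : ℝ => (x : ℂ)) '' Set.Icc (-z0) z0 →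
      δ z = (starRingEnd ℂ (δ (starRingEnd ℂ z)))⁻¹ ∧
      δ z = starRingEnd ℂ (δ (-(starRingEnd ℂ z))) := by
  intro z hz
  set g : ℝ → ℝ := fun ζ => Real.log ((1 - ‖r ζ‖ ^ 2) / (1 - ‖r z0‖ ^ 2))
  set c : ℂ := 1 / (2 * (π : ℂ) * I)
  have hχ' : ∀ z, χ z = c * cauchyTransform g (-z0) z0 z := hχ
  have hc : conj c = -c := by simp [c, map_ofNat]
  have hg : ∀ ζ ∈ Icc (-z0) z0, g (-ζ) = g ζ := fun ζ hζ => by simp only [g, hsym ζ hζ]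
  have hw : ((z - z0) / (z + z0)).arg ≠ π :=
    slitPlane_arg_ne_pi (sub_div_add_mem_slitPlane hz0.le hz)
  have hconj : (conj z - z0) / (conj z + z0) = conj ((z - z0) / (z + z0)) := by
    simp [map_div₀]
  have hneg_conj : (-conj z - z0) / (-conj z + z0) = (conj ((z - z0) / (z + z0)))⁻¹ := by
    rw [← hconj, inv_div, ← neg_div_neg_eq]
    congr 1 <;> ring
  constructor
  · rw [hδ (conj z), hχ' (conj z), map_mul, hconj, conj_conj_cpow_I_mul_ofReal hw, ← exp_conj,
      map_mul, hc, conj_cauchyTransform, conj_conj, mul_inv, ← Complex.exp_neg, inv_inv, hδ z,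
      hχ' z, neg_mul, neg_neg]
  · rw [hδ (-conj z), hχ' (-conj z), map_mul, hneg_conj, conj_inv_conj_cpow_I_mul_ofReal hw,
      ← exp_conj, map_mul, hc, conj_cauchyTransform, map_neg, conj_conj,
      cauchyTransform_neg_of_even hz0.le hg, neg_mul_neg, hδ z, hχ' z]

/-- Symmetries of the scalar Riemann–Hilbert factor `δ` for defocusing MKdV:
`δ(z) = (conj(δ(conj z)))⁻¹` and `δ(z) = conj(δ(-conj z))` on `ℂ ∖ [-z0, z0]`. -/
theorem stmt_0 (z0 : ℝ) (hz0 : 0 < z0) (r : ℝ → ℂ) (hr : Continuous r)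
    (hsup : ∃ m : ℝ, m < 1 ∧ ∀ ζ : ℝ, |ζ| ≤ z0 → ‖r ζ‖ ≤ m)
    (hsym : ∀ ζ : ℝ, ζ ∈ Set.Icc (-z0) z0 → ‖r (-ζ)‖ = ‖r ζ‖)
    (κ : ℝ) (hκ : κ = -(1 / (2 * π)) * Real.log (1 - ‖r z0‖ ^ 2))
    (χ : ℂ → ℂ)
    (hχ : ∀ z : ℂ, χ z = (1 / (2 * (π : ℂ) * Complex.I)) *
      ∫ ζ in (-z0)..z0,
        ((Real.log ((1 - ‖r ζ‖ ^ 2) / (1 - ‖r z0‖ ^ 2)) : ℝ) : ℂ) /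
          ((ζ : ℂ) - z))
    (δ : ℂ → ℂ)
    (hδ : ∀ z : ℂ, δ z = ((z - (z0 : ℂ)) / (z + (z0 : ℂ))) ^ (Complex.I * (κ : ℂ)) *
      Complex.exp (χ z)) :
    ∀ z : ℂ, z ∉ (fun x : ℝ => (x : ℂ)) '' Set.Icc (-z0) z0 →
      δ z = (starRingEnd ℂ (δ (starRingEnd ℂ z)))⁻¹ ∧
      δ z = starRingEnd ℂ (δ (-(starRingEnd ℂ z))) :=
  stmt_0_general z0 hz0 r hsym κ χ hχ δ hδ
end

section
/- Let t > 0 and x < 0, set z0 = √(-x/(12t)), and let θ(z) = 4tz³ + xz for z ∈ ℂ. Then for all real u, v with -z0 ≤ u ≤ 0 and 0 ≤ v ≤ -u, and z = (u + z0) + iv, one has Re(-2iθ(z)) ≤ -8·|u|·v·z0·t. -/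
open Real MeasureTheory

/-- In the Deift–Zhou steepest descent analysis of defocusing MKdV, with phase
`θ(z) = 4tz³ + xz` and stationary point `z0 = √(-x/(12t))`, one has
`Re(-2iθ(z)) ≤ -8·|u|·v·z0·t` for `z = (u + z0) + iv` with `-z0 ≤ u ≤ 0` and `0 ≤ v ≤ -u`. -/
theorem stmt_3 (t x : ℝ) (ht : 0 < t) (hx : x < 0)
    (z0 : ℝ) (hz0 : z0 = Real.sqrt (-x / (12 * t)))
    (θ : ℂ → ℂ) (hθ : ∀ z : ℂ, θ z = 4 * (t : ℂ) * z ^ 3 + (x : ℂ) * z) :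
    ∀ u v : ℝ, -z0 ≤ u → u ≤ 0 → 0 ≤ v → v ≤ -u →
      (-2 * Complex.I * θ (((u + z0 : ℝ) : ℂ) + (v : ℂ) * Complex.I)).re ≤
        -8 * |u| * v * z0 * t := by
  intro u v h1 h2 h3 h4
  have hz0nn : 0 ≤ z0 := hz0 ▸ Real.sqrt_nonneg _
  have hz0sq : z0 ^ 2 = -x / (12 * t) := by
    rw [hz0, Real.sq_sqrt]
    apply div_nonneg <;> nlinarith
  have hxe : x = -12 * t * z0 ^ 2 := by
    field_simp at hz0sq
    linarith
  have habs : |u| = -u := abs_of_nonpos h2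
  have hre : (-2 * Complex.I * θ (((u + z0 : ℝ) : ℂ) + (v : ℂ) * Complex.I)).re
      = 24 * t * v * (u + z0) ^ 2 - 8 * t * v ^ 3 + 2 * x * v := by
    rw [hθ]
    simp [Complex.ext_iff, pow_succ, Complex.mul_re, Complex.mul_im, Complex.add_re,
      Complex.add_im]
    ring
  rw [hre, habs, hxe]
  nlinarith [mul_nonpos_of_nonneg_of_nonpos (mul_nonneg ht.le h3) (mul_nonpos_of_nonpos_of_nonneg h2 (by linarith : (0:ℝ) ≤ 3*u + 5*z0)), mul_nonneg ht.le (mul_nonneg h3 (sq_nonneg v))]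
end

section
/- Let τ > 0 and define θ̃(ζ) = 4(ζ³ - 3·τ^{2/3}·ζ) for ζ ∈ ℂ. Then for all real u, v with u ≥ v ≥ 0 and ζ = (u + τ^{1/3}) + iv one has Re(2iθ̃(ζ)) ≤ -16·u²·v. -/
open Real MeasureTheory

/-- In the Painlevé Region III (x < 0) of the long-time analysis of defocusing MKdV,
after scaling, the phase `θ̃(ζ) = 4(ζ³ - 3τ^{2/3}ζ)` satisfies
`Re(2iθ̃(ζ)) ≤ -16u²v` for `ζ = (u + τ^{1/3}) + iv` with `u ≥ v ≥ 0`. -/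
theorem stmt_4 (τ : ℝ) (hτ : 0 < τ)
    (θ : ℂ → ℂ)
    (hθ : ∀ ζ : ℂ, θ ζ = 4 * (ζ ^ 3 - 3 * ((τ ^ ((2 : ℝ) / 3) : ℝ) : ℂ) * ζ)) :
    ∀ u v : ℝ, v ≤ u → 0 ≤ v →
      (2 * Complex.I * θ (((u + τ ^ ((1 : ℝ) / 3) : ℝ) : ℂ) + (v : ℂ) * Complex.I)).re ≤
        -16 * u ^ 2 * v := by
  intro u v huv hv
  set s : ℝ := τ ^ ((1 : ℝ) / 3) with hs_def
  have hs : 0 < s := Real.rpow_pos_of_pos hτ _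
  have hss : τ ^ ((2 : ℝ) / 3) = s ^ 2 := by
    rw [hs_def, ← Real.rpow_natCast (τ ^ ((1:ℝ)/3)) 2, ← Real.rpow_mul hτ.le]
    norm_num
  rw [hθ, hss]
  simp only [Complex.mul_re, Complex.mul_im, Complex.add_re, Complex.add_im,
    Complex.sub_re, Complex.sub_im, Complex.ofReal_re, Complex.ofReal_im,
    Complex.I_re, Complex.I_im, Complex.re_ofNat, Complex.im_ofNat,
    pow_succ, pow_zero, one_mul]
  ring_nf
  nlinarith [mul_nonneg hv (mul_nonneg (hv.trans huv) hs.le), sq_nonneg v,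
    mul_nonneg hv (mul_nonneg (sub_nonneg.2 huv) (add_nonneg hv (hv.trans huv)))]
end

section
/- Let τ > 0, let η be a real number with 0 < η ≤ τ^{1/3}, and define θ̃(ζ) = 4ζ³ + 12·τ^{2/3}·ζ for ζ ∈ ℂ. Then for all real u, v with 0 ≤ v ≤ |u|, and ζ = u + i(v + η), one has Re(2iθ̃(ζ)) ≤ -16·(u²·v + τ^{2/3}·η). -/
open Real MeasureTheory

/-- In Region IV of the long-time analysis of defocusing MKdV (x > 0), with phase
`θ̃(ζ) = 4ζ³ + 12τ^{2/3}ζ` and contour through `iη` with `0 < η ≤ τ^{1/3}`, one has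
`Re(2iθ̃(ζ)) ≤ -16(u²v + τ^{2/3}η)` for `ζ = u + i(v + η)` with `0 ≤ v ≤ |u|`. -/
theorem stmt_7 (τ η : ℝ) (hτ : 0 < τ) (hη : 0 < η) (hη' : η ≤ τ ^ ((1 : ℝ) / 3))
    (θ : ℂ → ℂ)
    (hθ : ∀ ζ : ℂ, θ ζ = 4 * ζ ^ 3 + 12 * ((τ ^ ((2 : ℝ) / 3) : ℝ) : ℂ) * ζ) :
    ∀ u v : ℝ, 0 ≤ v → v ≤ |u| →
      (2 * Complex.I * θ ((u : ℂ) + ((v + η : ℝ) : ℂ) * Complex.I)).re ≤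
        -16 * (u ^ 2 * v + τ ^ ((2 : ℝ) / 3) * η) := by
  intro u v hv huv
  set T := τ ^ ((2 : ℝ) / 3) with hT
  have hre : (2 * Complex.I * θ ((u : ℂ) + ((v + η : ℝ) : ℂ) * Complex.I)).re =
      -24 * u ^ 2 * (v + η) + 8 * (v + η) ^ 3 - 24 * T * (v + η) := by
    rw [hθ]
    simp [Complex.mul_re, Complex.mul_im, Complex.add_re, Complex.add_im, pow_succ]
    ring
  rw [hre]
  have hT2 : η ^ 2 ≤ T := by
    have h2 : (τ ^ ((1 : ℝ) / 3)) ^ 2 = T := by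
      rw [hT, ← Real.rpow_natCast (τ ^ ((1 : ℝ) / 3)) 2, ← Real.rpow_mul hτ.le]
      norm_num
    calc η ^ 2 ≤ (τ ^ ((1 : ℝ) / 3)) ^ 2 := by
          apply pow_le_pow_left₀ hη.le hη'
      _ = T := h2
  have hv2 : v ^ 2 ≤ u ^ 2 := by nlinarith [sq_abs u, abs_nonneg u]
  nlinarith [mul_nonneg hv hη.le, mul_nonneg (mul_nonneg hv hη.le) hη.le,
    mul_le_mul_of_nonneg_left hv2 hη.le, mul_le_mul_of_nonneg_left hT2 hv,
    mul_le_mul_of_nonneg_left hv2 hv, sq_nonneg u, sq_nonneg (v - η)]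
end

section
/- Let 𝒜 be a ring with identity 1 and let A, B ∈ 𝒜 be such that 1 - A and 1 - B are invertible. Then (1 - A - B)·(1 + A·(1-A)^{-1} + B·(1-B)^{-1}) = 1 - B·A·(1-A)^{-1} - A·B·(1-B)^{-1}, and (1 + A·(1-A)^{-1} + B·(1-B)^{-1})·(1 - A - B) = 1 - (1-A)^{-1}·A·B - (1-B)^{-1}·B·A. -/
/-- The Deift–Zhou resolvent identity: in any unital ring, if `1 - A` and `1 - B`
are invertible, then
`(1 - A - B)(1 + A(1-A)⁻¹ + B(1-B)⁻¹) = 1 - BA(1-A)⁻¹ - AB(1-B)⁻¹` and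
`(1 + A(1-A)⁻¹ + B(1-B)⁻¹)(1 - A - B) = 1 - (1-A)⁻¹AB - (1-B)⁻¹BA`. -/
theorem stmt_8 {R : Type*} [Ring R] (A B : R)
    (hA : IsUnit (1 - A)) (hB : IsUnit (1 - B)) :
    (1 - A - B) * (1 + A * Ring.inverse (1 - A) + B * Ring.inverse (1 - B)) =
      1 - B * A * Ring.inverse (1 - A) - A * B * Ring.inverse (1 - B) ∧
    (1 + A * Ring.inverse (1 - A) + B * Ring.inverse (1 - B)) * (1 - A - B) =
      1 - Ring.inverse (1 - A) * A * B - Ring.inverse (1 - B) * B * A := by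
  set a := Ring.inverse (1 - A) with ha
  set b := Ring.inverse (1 - B) with hb
  have h1 : A * a = a - 1 := by
    have := Ring.mul_inverse_cancel _ hA
    rw [← ha] at this
    rw [sub_mul, one_mul] at this
    rw [sub_eq_iff_eq_add] at this
    exact eq_sub_of_add_eq (by rw [add_comm]; exact this.symm)
  have h2 : a * A = a - 1 := by
    have := Ring.inverse_mul_cancel _ hA
    rw [← ha] at this
    rw [mul_sub, mul_one] at this
    rw [sub_eq_iff_eq_add] at this
    exact eq_sub_of_add_eq (by rw [add_comm]; exact this.symm)
  have h3 : B * b = b - 1 := by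
    have := Ring.mul_inverse_cancel _ hB
    rw [← hb] at this
    rw [sub_mul, one_mul] at this
    rw [sub_eq_iff_eq_add] at this
    exact eq_sub_of_add_eq (by rw [add_comm]; exact this.symm)
  have h4 : b * B = b - 1 := by
    have := Ring.inverse_mul_cancel _ hB
    rw [← hb] at this
    rw [mul_sub, mul_one] at this
    rw [sub_eq_iff_eq_add] at this
    exact eq_sub_of_add_eq (by rw [add_comm]; exact this.symm)
  constructor <;>
    · simp only [mul_add, add_mul, mul_sub, sub_mul, mul_one, one_mul, mul_assoc,
        h1, h2, h3, h4]
      abel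
end

section
/- Let 4 < p < ∞. There is a constant C_p depending only on p such that for every t ≥ 1, every c ∈ ℝ, and every z = α + iβ ∈ ℂ one has ∫_{0}^{∞} ∫_{v}^{∞} ((α - c - u)² + (β - v)²)^{-1/2} · t^{-1/6} · (u² + v²)^{-1/4} · e^{-16·u²·v} du dv ≤ C_p · t^{2/(3p) - 1/6}. -/
/-!
The factor `t ^ (-1/6)` comes out of the integral and is at most `t ^ (2/(3p) - 1/6)`, so it
suffices to bound the remaining double integral uniformly in the pole `(A, B) = (α - c, β)`.
Write `K` for the Cauchy kernel and `w = (u² + v²)^(-1/4) e^(-16u²v) ≤ u^(-1/2) e^(-16u²v)`.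
Where `K ≤ 1` we use `K w ≤ w`. Where `K > 1`, Young's inequality gives `K w ≤ K^(3/2) + w³`,
and `K^(3/2) ≤ |u - A|^(-3/4) |v - B|^(-3/4)` is a product of integrable one-variable
singularities. Finally `u^(-m) e^(-c u² v)` is integrable over `0 < v < u` for `-1 < m < 2`:
integrating in `v` first gives at most `u^(-m) min(u, 1/(c u²))`.
-/

open Real MeasureTheory Set
open scoped ENNReal

lemma integral_le_toReal_lintegral {α : Type*} [MeasurableSpace α] (μ : Measure α) (f : α → ℝ) :
    ∫ x, f x ∂μ ≤ (∫⁻ x, ENNReal.ofReal (f x) ∂μ).toReal := by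
  by_cases hf : Integrable f μ
  · rw [integral_eq_lintegral_pos_part_sub_lintegral_neg_part hf]
    exact sub_le_self _ ENNReal.toReal_nonneg
  · rw [integral_undef hf]
    exact ENNReal.toReal_nonneg

lemma integral_integral_le_toReal_lintegral_lintegral {α β : Type*} [MeasurableSpace α]
    [MeasurableSpace β] {μ : Measure α} {ν : α → Measure β} {f : α → β → ℝ}
    (hf : ∫⁻ x, ∫⁻ y, ENNReal.ofReal (f x y) ∂ν x ∂μ ≠ ∞) :
    ∫ x, ∫ y, f x y ∂ν x ∂μ ≤ (∫⁻ x, ∫⁻ y, ENNReal.ofReal (f x y) ∂ν x ∂μ).toReal :=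
  (integral_le_toReal_lintegral μ _).trans <| ENNReal.toReal_mono hf <| lintegral_mono fun _ =>
    (ENNReal.ofReal_le_ofReal (integral_le_toReal_lintegral _ _)).trans ENNReal.ofReal_toReal_le

noncomputable def truncAbsRpow : ℝ → ℝ :=
  (Metric.ball (0 : ℝ) 1).indicator fun y => |y| ^ (-(3 : ℝ) / 4)

lemma truncAbsRpow_nonneg (x : ℝ) : 0 ≤ truncAbsRpow x :=
  indicator_nonneg (fun y _ => rpow_nonneg (abs_nonneg y) _) x

@[fun_prop]
lemma measurable_truncAbsRpow : Measurable truncAbsRpow :=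
  (continuous_abs.measurable.pow_const _).indicator measurableSet_ball

lemma integrable_truncAbsRpow : Integrable truncAbsRpow := by
  rw [truncAbsRpow, integrable_indicator_iff measurableSet_ball]
  refine integrableOn_ball_of_norm_le_rpow (μ := volume) (C := 1) (α := 3 / 4) (by simp)
    (by simp; norm_num) (Filter.Eventually.of_forall fun y => ?_)
    (continuous_abs.measurable.pow_const _).aestronglyMeasurable
  rw [norm_of_nonneg (rpow_nonneg (abs_nonneg y) _), one_mul, norm_eq_abs, neg_div]

lemma lintegral_truncAbsRpow_sub_mul (A B : ℝ) :
    ∫⁻ p : ℝ × ℝ, ENNReal.ofReal (truncAbsRpow (A - p.2)) *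
        ENNReal.ofReal (truncAbsRpow (B - p.1)) =
      (∫⁻ x, ENNReal.ofReal (truncAbsRpow x)) ^ 2 := by
  simp_rw [mul_comm (ENNReal.ofReal (truncAbsRpow (A - _)))]
  rw [Measure.volume_eq_prod,
    lintegral_prod_mul (f := fun v => ENNReal.ofReal (truncAbsRpow (B - v)))
      (g := fun u => ENNReal.ofReal (truncAbsRpow (A - u))) (by fun_prop) (by fun_prop),
    lintegral_sub_left_eq_self (fun x => ENNReal.ofReal (truncAbsRpow x)),
    lintegral_sub_left_eq_self (fun x => ENNReal.ofReal (truncAbsRpow x)), sq]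

lemma rpow_neg_half_sq_add_sq_mul_le {a b w : ℝ} (ha : a ≠ 0) (hb : b ≠ 0) (hw : 0 ≤ w) :
    (a ^ 2 + b ^ 2) ^ (-(1 : ℝ) / 2) * w ≤ truncAbsRpow a * truncAbsRpow b + (w + w ^ 3) := by
  have hab : 0 < a ^ 2 + b ^ 2 := by positivity
  have hK : 0 ≤ (a ^ 2 + b ^ 2) ^ (-(1 : ℝ) / 2) := rpow_nonneg hab.le _
  have hnear : 0 ≤ truncAbsRpow a * truncAbsRpow b :=
    mul_nonneg (truncAbsRpow_nonneg a) (truncAbsRpow_nonneg b)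
  rcases le_or_gt 1 (a ^ 2 + b ^ 2) with hfar | hclose
  · have : (a ^ 2 + b ^ 2) ^ (-(1 : ℝ) / 2) ≤ 1 :=
      rpow_le_one_of_one_le_of_nonpos hfar (by norm_num)
    nlinarith [pow_nonneg hw 3]
  · have hconj : (3 / 2 : ℝ).HolderConjugate 3 := by
      rw [holderConjugate_iff_eq_conjExponent (by norm_num)]; norm_num
    have hyoung := young_inequality_of_nonneg hK hw hconj
    rw [← rpow_mul hab.le, rpow_ofNat] at hyoung
    have ha1 : a ∈ Metric.ball 0 1 := by
      rw [mem_ball_zero_iff, norm_eq_abs, ← sq_lt_one_iff_abs_lt_one]; nlinarith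
    have hb1 : b ∈ Metric.ball 0 1 := by
      rw [mem_ball_zero_iff, norm_eq_abs, ← sq_lt_one_iff_abs_lt_one]; nlinarith
    have hprod : (a ^ 2 + b ^ 2) ^ (-(1 : ℝ) / 2 * (3 / 2)) ≤
        truncAbsRpow a * truncAbsRpow b := by
      rw [truncAbsRpow, indicator_of_mem ha1, indicator_of_mem hb1,
        ← mul_rpow (abs_nonneg a) (abs_nonneg b), show -(1 : ℝ) / 2 * (3 / 2) = -3 / 4 by norm_num]
      refine rpow_le_rpow_of_nonpos (by positivity) ?_ (by norm_num)
      nlinarith [sq_abs a, sq_abs b, sq_nonneg (|a| - |b|)]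
    nlinarith [pow_nonneg hw 3]

lemma rpow_sq_add_sq_mul_exp_le (c v : ℝ) {u : ℝ} (hu : 0 < u) :
    (u ^ 2 + v ^ 2) ^ (-(1 : ℝ) / 4) * exp (-c * u ^ 2 * v) ≤
      u ^ (-(1 / 2 : ℝ)) * exp (-c * u ^ 2 * v) := by
  refine mul_le_mul_of_nonneg_right ?_ (exp_pos _).le
  calc (u ^ 2 + v ^ 2) ^ (-(1 : ℝ) / 4) ≤ (u ^ 2) ^ (-(1 : ℝ) / 4) :=
        rpow_le_rpow_of_nonpos (by positivity) (by nlinarith) (by norm_num)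
    _ = u ^ (-(1 / 2 : ℝ)) := by
        rw [← rpow_natCast, ← rpow_mul hu.le]; norm_num

lemma rpow_neg_half_mul_exp_pow_three (c v : ℝ) {u : ℝ} (hu : 0 < u) :
    (u ^ (-(1 / 2 : ℝ)) * exp (-c * u ^ 2 * v)) ^ 3 =
      u ^ (-(3 / 2 : ℝ)) * exp (-(3 * c) * u ^ 2 * v) := by
  rw [mul_pow, ← rpow_natCast, ← rpow_mul hu.le, ← exp_nat_mul]
  congr 2 <;> push_cast <;> ring

lemma kernel_mul_weight_le (c : ℝ) {A B u v : ℝ} (hu : 0 < u) (hA : u ≠ A) (hB : v ≠ B) :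
    ((A - u) ^ 2 + (B - v) ^ 2) ^ (-(1 : ℝ) / 2) *
        ((u ^ 2 + v ^ 2) ^ (-(1 : ℝ) / 4) * exp (-c * u ^ 2 * v)) ≤
      truncAbsRpow (A - u) * truncAbsRpow (B - v) +
        (u ^ (-(1 / 2 : ℝ)) * exp (-c * u ^ 2 * v) +
          u ^ (-(3 / 2 : ℝ)) * exp (-(3 * c) * u ^ 2 * v)) := by
  have hw := rpow_sq_add_sq_mul_exp_le c v hu
  have hw0 : 0 ≤ (u ^ 2 + v ^ 2) ^ (-(1 : ℝ) / 4) * exp (-c * u ^ 2 * v) := by positivity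
  calc _ ≤ truncAbsRpow (A - u) * truncAbsRpow (B - v) +
        ((u ^ 2 + v ^ 2) ^ (-(1 : ℝ) / 4) * exp (-c * u ^ 2 * v) +
          ((u ^ 2 + v ^ 2) ^ (-(1 : ℝ) / 4) * exp (-c * u ^ 2 * v)) ^ 3) :=
        rpow_neg_half_sq_add_sq_mul_le (sub_ne_zero.2 hA.symm) (sub_ne_zero.2 hB.symm) hw0
    _ ≤ _ := by
        rw [← rpow_neg_half_mul_exp_pow_three c v hu]
        exact add_le_add le_rfl (add_le_add hw (pow_le_pow_left₀ hw0 hw 3))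

def wedge : Set (ℝ × ℝ) := {p | 0 < p.1 ∧ p.1 < p.2}

lemma measurableSet_wedge : MeasurableSet wedge :=
  (measurableSet_lt measurable_const measurable_fst).inter
    (measurableSet_lt measurable_fst measurable_snd)

lemma lintegral_Ioi_Ioi_eq_setLIntegral_wedge {F : ℝ → ℝ → ℝ≥0∞}
    (hF : Measurable fun p : ℝ × ℝ => F p.1 p.2) :
    ∫⁻ v in Ioi 0, ∫⁻ u in Ioi v, F v u = ∫⁻ p in wedge, F p.1 p.2 := by
  rw [← lintegral_indicator measurableSet_wedge, Measure.volume_eq_prod,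
    lintegral_prod _ (hF.indicator measurableSet_wedge).aemeasurable,
    ← lintegral_indicator measurableSet_Ioi]
  congr 1 with v
  rw [indicator_apply]
  split_ifs with hv
  · rw [← lintegral_indicator measurableSet_Ioi]
    congr 1 with u
    simp [wedge, indicator_apply, mem_Ioi.1 hv]
  · simp [wedge, mem_Ioi.not.1 hv]

lemma setLIntegral_wedge_eq_lintegral_Ioi_Ioo {F : ℝ → ℝ → ℝ≥0∞}
    (hF : Measurable fun p : ℝ × ℝ => F p.1 p.2) :
    ∫⁻ p in wedge, F p.1 p.2 = ∫⁻ u in Ioi 0, ∫⁻ v in Ioo 0 u, F v u := by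
  rw [← lintegral_indicator measurableSet_wedge, Measure.volume_eq_prod,
    lintegral_prod_symm _ (hF.indicator measurableSet_wedge).aemeasurable,
    ← lintegral_indicator measurableSet_Ioi]
  congr 1 with u
  rw [indicator_apply]
  split_ifs with hu
  · rw [← lintegral_indicator measurableSet_Ioo]
    rfl
  · have : ∀ v, ¬ (0 < v ∧ v < u) := fun v h => hu (mem_Ioi.2 (h.1.trans h.2))
    simp [wedge, this]

lemma lintegral_Ioo_rpow_mul_exp_le_rpow {c : ℝ} (hc : 0 ≤ c) (m : ℝ) {u : ℝ} (hu : 0 < u) :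
    ∫⁻ v in Ioo 0 u, ENNReal.ofReal (u ^ (-m) * exp (-c * u ^ 2 * v)) ≤
      ENNReal.ofReal (u ^ (1 - m)) := by
  calc ∫⁻ v in Ioo 0 u, ENNReal.ofReal (u ^ (-m) * exp (-c * u ^ 2 * v))
      ≤ ∫⁻ v in Ioo 0 u, ENNReal.ofReal (u ^ (-m)) := by
        refine setLIntegral_mono' measurableSet_Ioo fun v hv => ENNReal.ofReal_le_ofReal ?_
        refine mul_le_of_le_one_right (rpow_nonneg hu.le _) (exp_le_one_iff.2 ?_)
        have := hv.1.le
        nlinarith [mul_nonneg hc (sq_nonneg u)]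
    _ = ENNReal.ofReal (u ^ (1 - m)) := by
        rw [setLIntegral_const, volume_Ioo, sub_zero, ← ENNReal.ofReal_mul (rpow_nonneg hu.le _),
          sub_eq_neg_add, rpow_add hu, rpow_one, mul_comm]

lemma lintegral_Ioo_rpow_mul_exp_le_inv_mul_rpow {c : ℝ} (hc : 0 < c) (m : ℝ) {u : ℝ}
    (hu : 0 < u) :
    ∫⁻ v in Ioo 0 u, ENNReal.ofReal (u ^ (-m) * exp (-c * u ^ 2 * v)) ≤
      ENNReal.ofReal (c⁻¹ * u ^ (-m - 2)) := by
  have hcu : -c * u ^ 2 < 0 := by nlinarith [mul_pos hc (pow_pos hu 2)]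
  have hint : IntegrableOn (fun v => u ^ (-m) * exp (-c * u ^ 2 * v)) (Ioi 0) :=
    (integrableOn_exp_mul_Ioi hcu 0).const_mul _
  calc ∫⁻ v in Ioo 0 u, ENNReal.ofReal (u ^ (-m) * exp (-c * u ^ 2 * v))
      ≤ ∫⁻ v in Ioi 0, ENNReal.ofReal (u ^ (-m) * exp (-c * u ^ 2 * v)) :=
        lintegral_mono_set Ioo_subset_Ioi_self
    _ = ENNReal.ofReal (c⁻¹ * u ^ (-m - 2)) := by
        rw [← ofReal_integral_eq_lintegral_ofReal hint
          (Filter.Eventually.of_forall fun v => by positivity), integral_const_mul,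
          integral_exp_mul_Ioi hcu, rpow_sub hu, rpow_two]
        congr 1
        field_simp
        simp

lemma setLIntegral_wedge_rpow_mul_exp_lt_top {c m : ℝ} (hc : 0 < c) (hm : -1 < m) (hm' : m < 2) :
    ∫⁻ p in wedge, ENNReal.ofReal (p.2 ^ (-m) * exp (-c * p.2 ^ 2 * p.1)) < ∞ := by
  rw [setLIntegral_wedge_eq_lintegral_Ioi_Ioo
      (F := fun v u => ENNReal.ofReal (u ^ (-m) * exp (-c * u ^ 2 * v))) (by fun_prop),
    ← Ioc_union_Ioi_eq_Ioi zero_le_one, lintegral_union measurableSet_Ioi Ioc_disjoint_Ioi_same]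
  refine ENNReal.add_lt_top.2 ⟨?_, ?_⟩
  · have hint : IntegrableOn (fun u : ℝ => u ^ (1 - m)) (Ioc 0 1) :=
      (intervalIntegrable_iff_integrableOn_Ioc_of_le zero_le_one).1
        (intervalIntegral.intervalIntegrable_rpow' (by linarith))
    calc _ ≤ ∫⁻ u in Ioc 0 1, ENNReal.ofReal (u ^ (1 - m)) :=
          setLIntegral_mono' measurableSet_Ioc fun u hu =>
            lintegral_Ioo_rpow_mul_exp_le_rpow hc.le m hu.1
      _ < ∞ := hint.lintegral_lt_top
  · have hint : IntegrableOn (fun u : ℝ => c⁻¹ * u ^ (-m - 2)) (Ioi 1) :=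
      (integrableOn_Ioi_rpow_of_lt (by linarith) one_pos).const_mul _
    calc _ ≤ ∫⁻ u in Ioi 1, ENNReal.ofReal (c⁻¹ * u ^ (-m - 2)) :=
          setLIntegral_mono' measurableSet_Ioi fun u hu =>
            lintegral_Ioo_rpow_mul_exp_le_inv_mul_rpow hc m (zero_lt_one.trans hu)
      _ < ∞ := hint.lintegral_lt_top

lemma exists_lintegral_kernel_mul_weight_le {c : ℝ} (hc : 0 < c) :
    ∃ M : ℝ≥0∞, M ≠ ∞ ∧ ∀ A B : ℝ, ∫⁻ v in Ioi 0, ∫⁻ u in Ioi v,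
      ENNReal.ofReal (((A - u) ^ 2 + (B - v) ^ 2) ^ (-(1 : ℝ) / 2) *
        ((u ^ 2 + v ^ 2) ^ (-(1 : ℝ) / 4) * exp (-c * u ^ 2 * v))) ≤ M := by
  have hI : ∫⁻ x, ENNReal.ofReal (truncAbsRpow x) ≠ ∞ :=
    integrable_truncAbsRpow.lintegral_lt_top.ne
  have hg : ∫⁻ p in wedge, ENNReal.ofReal (p.2 ^ (-(1 / 2 : ℝ)) * exp (-c * p.2 ^ 2 * p.1) +
      p.2 ^ (-(3 / 2 : ℝ)) * exp (-(3 * c) * p.2 ^ 2 * p.1)) ≠ ∞ := by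
    refine ne_top_of_le_ne_top ?_ (lintegral_mono fun p => ENNReal.ofReal_add_le)
    rw [lintegral_add_left (by fun_prop)]
    exact ENNReal.add_ne_top.2
      ⟨(setLIntegral_wedge_rpow_mul_exp_lt_top hc (by norm_num) (by norm_num)).ne,
        (setLIntegral_wedge_rpow_mul_exp_lt_top (by positivity) (by norm_num) (by norm_num)).ne⟩
  refine ⟨(∫⁻ x, ENNReal.ofReal (truncAbsRpow x)) ^ 2 + _,
    ENNReal.add_ne_top.2 ⟨ENNReal.pow_ne_top hI, hg⟩, fun A B => ?_⟩
  have hnull : ∀ᵐ p : ℝ × ℝ, p.2 ≠ A ∧ p.1 ≠ B := by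
    rw [Measure.volume_eq_prod]
    exact (Measure.quasiMeasurePreserving_snd.ae (Measure.ae_ne _ A)).and
      (Measure.quasiMeasurePreserving_fst.ae (Measure.ae_ne _ B))
  rw [lintegral_Ioi_Ioi_eq_setLIntegral_wedge (by fun_prop)]
  calc _ ≤ ∫⁻ p in wedge, ENNReal.ofReal (truncAbsRpow (A - p.2)) *
          ENNReal.ofReal (truncAbsRpow (B - p.1)) +
        ENNReal.ofReal (p.2 ^ (-(1 / 2 : ℝ)) * exp (-c * p.2 ^ 2 * p.1) +
          p.2 ^ (-(3 / 2 : ℝ)) * exp (-(3 * c) * p.2 ^ 2 * p.1)) := by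
        refine setLIntegral_mono_ae (by fun_prop) ?_
        filter_upwards [hnull] with p ⟨hA, hB⟩ hp
        have hu : 0 < p.2 := hp.1.trans hp.2
        rw [← ENNReal.ofReal_mul (truncAbsRpow_nonneg _),
          ← ENNReal.ofReal_add (mul_nonneg (truncAbsRpow_nonneg _) (truncAbsRpow_nonneg _))
            (by positivity)]
        exact ENNReal.ofReal_le_ofReal (kernel_mul_weight_le c hu hA hB)
    _ = _ := lintegral_add_left (by fun_prop) _
    _ ≤ _ := by
        gcongr
        exact (setLIntegral_le_lintegral _ _).trans_eq (lintegral_truncAbsRpow_sub_mul A B)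

/-- Region III ∂̄-estimate via Hölder: for `4 < p < ∞` there is `C_p` such that for
all `t ≥ 1` the double integral with Cauchy kernel, singular factor
`t^{-1/6}(u²+v²)^{-1/4}` and decay `e^{-16u²v}` is at most `C_p · t^{2/(3p)-1/6}`. -/
theorem stmt_15 (p : ℝ) (hp : 4 < p) :
    ∃ C : ℝ, 0 < C ∧ ∀ t : ℝ, 1 ≤ t → ∀ c α β : ℝ,
      (∫ v in Set.Ioi (0 : ℝ), ∫ u in Set.Ioi v,
          ((α - c - u) ^ 2 + (β - v) ^ 2) ^ (-(1 : ℝ) / 2) *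
            (t ^ (-(1 : ℝ) / 6) * (u ^ 2 + v ^ 2) ^ (-(1 : ℝ) / 4)) *
            Real.exp (-16 * u ^ 2 * v)) ≤
        C * t ^ (2 / (3 * p) - 1 / 6) := by
  obtain ⟨M, hM, hbound⟩ := exists_lintegral_kernel_mul_weight_le (c := 16) (by norm_num)
  refine ⟨M.toReal + 1, by positivity, fun t ht c α β => ?_⟩
  have hexp : t ^ (-(1 : ℝ) / 6) ≤ t ^ (2 / (3 * p) - 1 / 6) := by
    refine rpow_le_rpow_of_exponent_le ht ?_
    have : 0 < 2 / (3 * p) := by positivity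
    linarith
  have hint : ∫ v in Ioi 0, ∫ u in Ioi v, ((α - c - u) ^ 2 + (β - v) ^ 2) ^ (-(1 : ℝ) / 2) *
      ((u ^ 2 + v ^ 2) ^ (-(1 : ℝ) / 4) * exp (-16 * u ^ 2 * v)) ≤ M.toReal :=
    (integral_integral_le_toReal_lintegral_lintegral (ne_top_of_le_ne_top hM (hbound _ _))).trans
      (ENNReal.toReal_mono hM (hbound _ _))
  calc _ = t ^ (-(1 : ℝ) / 6) * ∫ v in Ioi 0, ∫ u in Ioi v,
        ((α - c - u) ^ 2 + (β - v) ^ 2) ^ (-(1 : ℝ) / 2) *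
          ((u ^ 2 + v ^ 2) ^ (-(1 : ℝ) / 4) * exp (-16 * u ^ 2 * v)) := by
        rw [← integral_const_mul]
        congr 1 with v
        rw [← integral_const_mul]
        congr 1 with u
        ring
    _ ≤ t ^ (2 / (3 * p) - 1 / 6) * M.toReal := by gcongr
    _ ≤ (M.toReal + 1) * t ^ (2 / (3 * p) - 1 / 6) := by
        rw [mul_comm]
        gcongr
        linarith
end
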